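/- Uniqueness of marginals of relaxed minimizers: if h_ε and h̃_ε both minimize Iᶜ_ε over {h : 0 ≤ h ≤ h̄}, then ⟨h_ε⟩_x = ⟨h̃_ε⟩_x a.e. and ⟨h_ε⟩_y = ⟨h̃_ε⟩_y a.e. -/

import Mathlib

/-!
The cost is an affine functional of `h` plus squared `L²` distances from the marginals of `h`,
which depend linearly on `h`, to `f` and `g`. By the parallelogram identity, the cost of the
midpoint `(h₁ + h₂) / 2` is the mean of the costs of `h₁` and `h₂` minus `1 / (8ε)` times the
sum of the squared `L²` distances between their marginals. The midpoint is admissible and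
`h₁`, `h₂` are minimizers, so these distances vanish.

Every admissible `h` is bounded and vanishes outside the compact rectangle spanned by the
projections of `tsupport h̄`, which makes all terms of the cost genuine integrals.
-/

open MeasureTheory

/-- The relaxed (penalized) transport cost
`Iᶜ_ε(h) = ∬ c h + (1/(2ε))‖⟨h⟩ₓ − f‖²_{L²} + (1/(2ε))‖⟨h⟩_y − g‖²_{L²}`. -/
noncomputable def relaxedCost (m n : ℕ) (ε : ℝ)
    (c : (Fin m → ℝ) × (Fin n → ℝ) → ℝ)
    (f : (Fin m → ℝ) → ℝ) (g : (Fin n → ℝ) → ℝ)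
    (h : (Fin m → ℝ) × (Fin n → ℝ) → ℝ) : ℝ :=
  (∫ p, c p * h p)
    + (1 / (2 * ε)) * (∫ x, ((∫ y, h (x, y)) - f x) ^ 2)
    + (1 / (2 * ε)) * (∫ y, ((∫ x, h (x, y)) - g y) ^ 2)

open Set

lemma norm_le_indicator_of_le {X : Type*} {h hbar : X → ℝ} {K : Set X} {C : ℝ} {p : X}
    (hK : Function.support hbar ⊆ K) (hC : ∀ p, hbar p ≤ C) (hp : 0 ≤ h p ∧ h p ≤ hbar p) :
    ‖h p‖ ≤ K.indicator (fun _ => C) p := by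
  by_cases hpK : p ∈ K
  · rw [indicator_of_mem hpK, Real.norm_of_nonneg hp.1]
    exact hp.2.trans (hC p)
  · have : hbar p = 0 := Function.notMem_support.1 fun hp' => hpK (hK hp')
    rw [indicator_of_notMem hpK, norm_le_zero_iff]
    exact le_antisymm (this ▸ hp.2) hp.1

section

variable {α β : Type*} [MeasurableSpace α] [MeasurableSpace β] {μ : Measure α} {ν : Measure β}
  {h : α × β → ℝ} {F : α → ℝ} {G : β → ℝ}

lemma norm_integral_prod_right_le_of_norm_le_mul [SFinite ν] (hG : Integrable G ν)
    (hdom : ∀ᵐ p ∂μ.prod ν, ‖h p‖ ≤ F p.1 * G p.2) :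
    ∀ᵐ x ∂μ, ‖∫ y, h (x, y) ∂ν‖ ≤ F x * ∫ y, G y ∂ν := by
  filter_upwards [Measure.ae_ae_of_ae_prod hdom] with x hx
  rw [← integral_const_mul]
  exact norm_integral_le_of_norm_le (hG.const_mul _) hx

lemma memLp_integral_prod_right_of_norm_le_mul [SFinite ν] {q : ENNReal}
    (hh : AEStronglyMeasurable h (μ.prod ν)) (hF : MemLp F q μ) (hG : Integrable G ν)
    (hdom : ∀ᵐ p ∂μ.prod ν, ‖h p‖ ≤ F p.1 * G p.2) :
    MemLp (fun x => ∫ y, h (x, y) ∂ν) q μ :=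
  (hF.mul_const _).of_le hh.integral_prod_right' <|
    (norm_integral_prod_right_le_of_norm_le_mul hG hdom).mono fun _ hx =>
      hx.trans (Real.le_norm_self _)

lemma memLp_integral_prod_left_of_norm_le_mul [SFinite μ] [SFinite ν] {q : ENNReal}
    (hh : AEStronglyMeasurable h (μ.prod ν)) (hF : Integrable F μ) (hG : MemLp G q ν)
    (hdom : ∀ᵐ p ∂μ.prod ν, ‖h p‖ ≤ F p.1 * G p.2) :
    MemLp (fun y => ∫ x, h (x, y) ∂μ) q ν :=
  memLp_integral_prod_right_of_norm_le_mul (h := h ∘ Prod.swap) hh.prod_swap hG hF <|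
    (Measure.measurePreserving_swap.quasiMeasurePreserving.ae hdom).mono fun _ hp =>
      hp.trans_eq (mul_comm _ _)

lemma integral_prod_right_midpoint [SFinite μ] [SFinite ν] {h₁ h₂ : α × β → ℝ}
    (h₁i : Integrable h₁ (μ.prod ν)) (h₂i : Integrable h₂ (μ.prod ν)) :
    ∀ᵐ x ∂μ, ∫ y, (h₁ (x, y) + h₂ (x, y)) / 2 ∂ν
      = ((∫ y, h₁ (x, y) ∂ν) + ∫ y, h₂ (x, y) ∂ν) / 2 := by
  filter_upwards [h₁i.prod_right_ae, h₂i.prod_right_ae] with x hx₁ hx₂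
  rw [integral_div, integral_add hx₁ hx₂]

lemma integral_prod_left_midpoint [SFinite μ] [SFinite ν] {h₁ h₂ : α × β → ℝ}
    (h₁i : Integrable h₁ (μ.prod ν)) (h₂i : Integrable h₂ (μ.prod ν)) :
    ∀ᵐ y ∂ν, ∫ x, (h₁ (x, y) + h₂ (x, y)) / 2 ∂μ
      = ((∫ x, h₁ (x, y) ∂μ) + ∫ x, h₂ (x, y) ∂μ) / 2 := by
  filter_upwards [h₁i.prod_left_ae, h₂i.prod_left_ae] with y hy₁ hy₂
  rw [integral_div, integral_add hy₁ hy₂]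

end

section

variable {α : Type*} [MeasurableSpace α] {μ : Measure α} {u v w : α → ℝ}

lemma integrable_sq_sub (hu : MemLp u 2 μ) (hv : MemLp v 2 μ) :
    Integrable (fun x => (u x - v x) ^ 2) μ :=
  (hu.sub hv).integrable_sq

lemma integral_sq_midpoint_sub (hu : MemLp u 2 μ) (hv : MemLp v 2 μ) (hw : MemLp w 2 μ) :
    ∫ x, ((u x + v x) / 2 - w x) ^ 2 ∂μ + 1 / 4 * ∫ x, (u x - v x) ^ 2 ∂μ
      = ((∫ x, (u x - w x) ^ 2 ∂μ) + ∫ x, (v x - w x) ^ 2 ∂μ) / 2 := by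
  have hmid : MemLp (fun x => (u x + v x) / 2) 2 μ := by
    simpa only [div_eq_mul_inv, Pi.add_apply] using (hu.add hv).mul_const 2⁻¹
  calc
  _ = ∫ x, (((u x + v x) / 2 - w x) ^ 2 + 1 / 4 * (u x - v x) ^ 2) ∂μ := by
    rw [← integral_const_mul]
    exact (integral_add (integrable_sq_sub hmid hw)
      ((integrable_sq_sub hu hv).const_mul _)).symm
  _ = ∫ x, ((u x - w x) ^ 2 + (v x - w x) ^ 2) / 2 ∂μ := by
    congr 1 with x
    ring
  _ = _ := by
    rw [integral_div, integral_add (integrable_sq_sub hu hw) (integrable_sq_sub hv hw)]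

lemma ae_eq_of_integral_sq_sub_nonpos (hu : MemLp u 2 μ) (hv : MemLp v 2 μ)
    (h : ∫ x, (u x - v x) ^ 2 ∂μ ≤ 0) : u =ᵐ[μ] v := by
  have hzero := (integral_eq_zero_iff_of_nonneg (fun x => sq_nonneg (u x - v x))
    (integrable_sq_sub hu hv)).1 (h.antisymm (integral_nonneg fun x => sq_nonneg _))
  filter_upwards [hzero] with x hx
  exact sub_eq_zero.1 (pow_eq_zero_iff two_ne_zero |>.1 hx)

lemma integrable_mul_of_norm_le_indicator {c h : α → ℝ} {K : Set α} {C : ℝ}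
    (hc : IntegrableOn c K μ) (hK : MeasurableSet K) (hh : AEStronglyMeasurable h μ)
    (hdom : ∀ᵐ p ∂μ, ‖h p‖ ≤ K.indicator (fun _ => C) p) :
    Integrable (fun p => c p * h p) μ := by
  refine ((hc.integrable_indicator hK).mul_bdd hh (c := |C|) (hdom.mono fun p hp =>
    hp.trans (by by_cases hpK : p ∈ K <;> simp [hpK, le_abs_self]))).congr ?_
  filter_upwards [hdom] with p hp
  by_cases hpK : p ∈ K
  · simp [hpK]
  · have : h p = 0 := norm_le_zero_iff.1 (by simpa [hpK] using hp)
    simp [this]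

end

section

variable {α β : Type*} [MeasureSpace α] [MeasureSpace β]

/-- Without these, some integral in `relaxedCost` may be a junk `0`. -/
structure RelaxedCostIntegrable (c h : α × β → ℝ) : Prop where
  integrable : Integrable h
  integrable_mul : Integrable fun p => c p * h p
  memLp_marginal_fst : MemLp (fun x => ∫ y, h (x, y)) 2
  memLp_marginal_snd : MemLp (fun y => ∫ x, h (x, y)) 2

lemma RelaxedCostIntegrable.of_norm_le_indicator [SFinite (volume : Measure α)]
    [SFinite (volume : Measure β)] {c h : α × β → ℝ} {s : Set α} {t : Set β} {C : ℝ}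
    (hs : MeasurableSet s) (ht : MeasurableSet t) (hμs : volume s ≠ ⊤) (hνt : volume t ≠ ⊤)
    (hc : IntegrableOn c (s ×ˢ t)) (hh : AEStronglyMeasurable h)
    (hdom : ∀ᵐ p, ‖h p‖ ≤ (s ×ˢ t).indicator (fun _ => C) p) :
    RelaxedCostIntegrable c h := by
  have hF (q) : MemLp (s.indicator fun _ => C) q := memLp_indicator_const q hs C (.inr hμs)
  have hG (q) : MemLp (t.indicator fun _ => (1 : ℝ)) q := memLp_indicator_const q ht 1 (.inr hνt)
  have hdom' : ∀ᵐ p ∂(volume : Measure α).prod volume,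
      ‖h p‖ ≤ s.indicator (fun _ => C) p.1 * t.indicator (fun _ => 1) p.2 :=
    hdom.mono fun p hp => hp.trans_eq (by by_cases p.1 ∈ s <;> by_cases p.2 ∈ t <;> simp [*])
  exact
    { integrable := ((memLp_one_iff_integrable.1 (hF 1)).mul_prod
        (memLp_one_iff_integrable.1 (hG 1))).mono' hh hdom'
      integrable_mul := integrable_mul_of_norm_le_indicator hc (hs.prod ht) hh hdom
      memLp_marginal_fst := memLp_integral_prod_right_of_norm_le_mul hh (hF 2)
        (memLp_one_iff_integrable.1 (hG 1)) hdom'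
      memLp_marginal_snd := memLp_integral_prod_left_of_norm_le_mul hh
        (memLp_one_iff_integrable.1 (hF 1)) (hG 2) hdom' }

lemma RelaxedCostIntegrable.of_le_of_hasCompactSupport [TopologicalSpace α] [TopologicalSpace β]
    [T2Space α] [T2Space β] [OpensMeasurableSpace α] [OpensMeasurableSpace β]
    [IsFiniteMeasureOnCompacts (volume : Measure α)]
    [IsFiniteMeasureOnCompacts (volume : Measure β)]
    [SFinite (volume : Measure α)] [SFinite (volume : Measure β)]
    {c h hbar : α × β → ℝ} {C : ℝ} (hc : LocallyIntegrable c) (hC : ∀ p, hbar p ≤ C)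
    (hbar_supp : HasCompactSupport hbar) (hh : AEStronglyMeasurable h)
    (hbds : ∀ᵐ p, 0 ≤ h p ∧ h p ≤ hbar p) :
    RelaxedCostIntegrable c h :=
  have hs := hbar_supp.image continuous_fst
  have ht := hbar_supp.image continuous_snd
  .of_norm_le_indicator hs.measurableSet ht.measurableSet hs.measure_lt_top.ne
    ht.measure_lt_top.ne (hc.integrableOn_isCompact (hs.prod ht)) hh
    (hbds.mono fun _ hp => norm_le_indicator_of_le
      ((subset_tsupport hbar).trans subset_fst_image_prod_snd_image) hC hp)

end

theorem relaxedCost_midpoint {m n : ℕ} (ε : ℝ) {c h₁ h₂ : (Fin m → ℝ) × (Fin n → ℝ) → ℝ}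
    {f : (Fin m → ℝ) → ℝ} {g : (Fin n → ℝ) → ℝ} (hf : MemLp f 2) (hg : MemLp g 2)
    (h₁r : RelaxedCostIntegrable c h₁) (h₂r : RelaxedCostIntegrable c h₂) :
    relaxedCost m n ε c f g (fun p => (h₁ p + h₂ p) / 2)
      + 1 / (8 * ε) * ((∫ x, ((∫ y, h₁ (x, y)) - ∫ y, h₂ (x, y)) ^ 2)
        + ∫ y, ((∫ x, h₁ (x, y)) - ∫ x, h₂ (x, y)) ^ 2)
      = (relaxedCost m n ε c f g h₁ + relaxedCost m n ε c f g h₂) / 2 := by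
  have hlin : ∫ p, c p * ((h₁ p + h₂ p) / 2)
      = ((∫ p, c p * h₁ p) + ∫ p, c p * h₂ p) / 2 := by
    rw [← integral_add h₁r.integrable_mul h₂r.integrable_mul, ← integral_div]
    congr 1 with p
    ring
  have hx : ∫ x, ((∫ y, (h₁ (x, y) + h₂ (x, y)) / 2) - f x) ^ 2
      = ∫ x, (((∫ y, h₁ (x, y)) + ∫ y, h₂ (x, y)) / 2 - f x) ^ 2 :=
    integral_congr_ae <| (integral_prod_right_midpoint h₁r.integrable h₂r.integrable).mono
      fun x hx => by simp only [hx]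
  have hy : ∫ y, ((∫ x, (h₁ (x, y) + h₂ (x, y)) / 2) - g y) ^ 2
      = ∫ y, (((∫ x, h₁ (x, y)) + ∫ x, h₂ (x, y)) / 2 - g y) ^ 2 :=
    integral_congr_ae <| (integral_prod_left_midpoint h₁r.integrable h₂r.integrable).mono
      fun y hy => by simp only [hy]
  have qx := integral_sq_midpoint_sub h₁r.memLp_marginal_fst h₂r.memLp_marginal_fst hf
  have qy := integral_sq_midpoint_sub h₁r.memLp_marginal_snd h₂r.memLp_marginal_snd hg
  simp only [relaxedCost]
  rw [hlin, hx, hy]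
  linear_combination (1 / (2 * ε)) * qx + (1 / (2 * ε)) * qy

theorem relaxed_marginals_unique (m n : ℕ) (ε : ℝ) (hε : 0 < ε)
    (hbar c : (Fin m → ℝ) × (Fin n → ℝ) → ℝ)
    (f : (Fin m → ℝ) → ℝ) (g : (Fin n → ℝ) → ℝ)
    (hbar_bdd : ∃ C, ∀ p, hbar p ≤ C) (hbar_supp : HasCompactSupport hbar)
    (f_meas : Measurable f)
    (f_sq_int : Integrable (fun x => (f x) ^ 2))
    (g_meas : Measurable g)
    (g_sq_int : Integrable (fun y => (g y) ^ 2))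
    (c_locint : LocallyIntegrable c)
    (h₁ h₂ : (Fin m → ℝ) × (Fin n → ℝ) → ℝ)
    (h₁_meas : Measurable h₁) (h₂_meas : Measurable h₂)
    (h₁_bds : ∀ᵐ p, 0 ≤ h₁ p ∧ h₁ p ≤ hbar p)
    (h₂_bds : ∀ᵐ p, 0 ≤ h₂ p ∧ h₂ p ≤ hbar p)
    (h₁_min : ∀ h : (Fin m → ℝ) × (Fin n → ℝ) → ℝ, Measurable h →
      (∀ᵐ p, 0 ≤ h p ∧ h p ≤ hbar p) →
      relaxedCost m n ε c f g h₁ ≤ relaxedCost m n ε c f g h)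
    (h₂_min : ∀ h : (Fin m → ℝ) × (Fin n → ℝ) → ℝ, Measurable h →
      (∀ᵐ p, 0 ≤ h p ∧ h p ≤ hbar p) →
      relaxedCost m n ε c f g h₂ ≤ relaxedCost m n ε c f g h) :
    (∀ᵐ x, (∫ y, h₁ (x, y)) = ∫ y, h₂ (x, y)) ∧
      (∀ᵐ y, (∫ x, h₁ (x, y)) = ∫ x, h₂ (x, y)) := by
  obtain ⟨C, hC⟩ := hbar_bdd
  have hreg (h) (hh : Measurable h) (hbds : ∀ᵐ p, 0 ≤ h p ∧ h p ≤ hbar p) :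
      RelaxedCostIntegrable c h :=
    .of_le_of_hasCompactSupport c_locint hC hbar_supp hh.aestronglyMeasurable hbds
  have h₁r := hreg h₁ h₁_meas h₁_bds
  have h₂r := hreg h₂ h₂_meas h₂_bds
  have hmid_bds : ∀ᵐ p, 0 ≤ (h₁ p + h₂ p) / 2 ∧ (h₁ p + h₂ p) / 2 ≤ hbar p := by
    filter_upwards [h₁_bds, h₂_bds] with p hp₁ hp₂
    constructor <;> linarith [hp₁.1, hp₁.2, hp₂.1, hp₂.2]
  have h₁₂ := le_antisymm (h₁_min h₂ h₂_meas h₂_bds) (h₂_min h₁ h₁_meas h₁_bds)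
  have h₁_le_mid :=
    h₁_min (fun p => (h₁ p + h₂ p) / 2) ((h₁_meas.add h₂_meas).div_const 2) hmid_bds
  have hmid := relaxedCost_midpoint ε
    ((memLp_two_iff_integrable_sq f_meas.aestronglyMeasurable).2 f_sq_int)
    ((memLp_two_iff_integrable_sq g_meas.aestronglyMeasurable).2 g_sq_int) h₁r h₂r
  set Dx := ∫ x, ((∫ y, h₁ (x, y)) - ∫ y, h₂ (x, y)) ^ 2
  set Dy := ∫ y, ((∫ x, h₁ (x, y)) - ∫ x, h₂ (x, y)) ^ 2
  have hDx : 0 ≤ Dx := integral_nonneg fun _ => sq_nonneg _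
  have hDy : 0 ≤ Dy := integral_nonneg fun _ => sq_nonneg _
  have hsum : Dx + Dy ≤ 0 := by
    have : 0 < 1 / (8 * ε) := by positivity
    nlinarith
  exact ⟨ae_eq_of_integral_sq_sub_nonpos h₁r.memLp_marginal_fst h₂r.memLp_marginal_fst
      (by linarith), ae_eq_of_integral_sq_sub_nonpos h₁r.memLp_marginal_snd
      h₂r.memLp_marginal_snd (by linarith)⟩
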